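/- Let x ∈ ℝ⁴ with x₃ > 0 and let a,c,d ∈ ℝ with (c,d) ≠ (0,0). Set ξ = a∂₁ + c∂₃ + d∂₄, X₄ = c∂₂ − a∂₃, X₅ = d∂₂ − a∂₄ and X₆ = d∂₃ − c∂₄. If the curvature tensor of the Siklos metric satisfies R(X₄,X₅)ξ = 0, R(X₄,X₆)ξ = 0 and R(X₅,X₆)ξ = 0 at x, then at the point (x₂,x₃,x₄) one has c·d·(H''₃₃ − H''₄₄) + H''₃₄·(d² − c²) = 0. -/

import Mathlib

open scoped BigOperators

/-- Partial derivative of `f : ℝⁿ → ℝ` in the `i`-th coordinate direction. -/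
noncomputable def pd {n : ℕ} (i : Fin n) (f : (Fin n → ℝ) → ℝ) (x : Fin n → ℝ) : ℝ :=
  deriv (fun t => f (Function.update x i t)) (x i)

/-- Christoffel symbols `Γᵏᵢⱼ` of a metric field `g`. -/
noncomputable def christoffel {n : ℕ} (g : (Fin n → ℝ) → Matrix (Fin n) (Fin n) ℝ)
    (x : Fin n → ℝ) (k i j : Fin n) : ℝ :=
  (1 / 2) * ∑ l, (g x)⁻¹ k l *
    (pd i (fun y => g y l j) x + pd j (fun y => g y l i) x - pd l (fun y => g y i j) x)

/-- `curv g x i j k l` is the `l`-th component of `R(∂ᵢ,∂ⱼ)∂ₖ` at `x`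
(convention `R(X,Y) = [∇_X,∇_Y] − ∇_{[X,Y]}`). -/
noncomputable def curv {n : ℕ} (g : (Fin n → ℝ) → Matrix (Fin n) (Fin n) ℝ)
    (x : Fin n → ℝ) (i j k l : Fin n) : ℝ :=
  pd i (fun y => christoffel g y l j k) x - pd j (fun y => christoffel g y l i k) x
    + ∑ m, (christoffel g x l i m * christoffel g x m j k
        - christoffel g x l j m * christoffel g x m i k)

/-- The Siklos metric with parameter `β` and defining function `H = H(x₂,x₃,x₄)`;
indices `0,1,2,3` correspond to the coordinates `x₁,x₂,x₃,x₄`. -/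
noncomputable def siklos (β : ℝ) (H : ℝ → ℝ → ℝ → ℝ) (x : Fin 4 → ℝ) :
    Matrix (Fin 4) (Fin 4) ℝ :=
  Matrix.of fun i j =>
    if (i = 0 ∧ j = 1) ∨ (i = 1 ∧ j = 0) ∨ (i = 2 ∧ j = 2) ∨ (i = 3 ∧ j = 3) then
      β ^ 2 / x 2 ^ 2
    else if i = 1 ∧ j = 1 then β ^ 2 / x 2 ^ 2 * H (x 1) (x 2) (x 3)
    else 0

/-- `H'₂`. -/
noncomputable def H2 (H : ℝ → ℝ → ℝ → ℝ) (a b c : ℝ) : ℝ := deriv (fun t => H t b c) a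
/-- `H'₃`. -/
noncomputable def H3 (H : ℝ → ℝ → ℝ → ℝ) (a b c : ℝ) : ℝ := deriv (fun t => H a t c) b
/-- `H'₄`. -/
noncomputable def H4 (H : ℝ → ℝ → ℝ → ℝ) (a b c : ℝ) : ℝ := deriv (fun t => H a b t) c
/-- `H''₂₃`. -/
noncomputable def H23 (H : ℝ → ℝ → ℝ → ℝ) (a b c : ℝ) : ℝ := deriv (fun t => H3 H t b c) a
/-- `H''₃₃`. -/
noncomputable def H33 (H : ℝ → ℝ → ℝ → ℝ) (a b c : ℝ) : ℝ := deriv (fun t => H3 H a t c) b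
/-- `H''₃₄`. -/
noncomputable def H34 (H : ℝ → ℝ → ℝ → ℝ) (a b c : ℝ) : ℝ := deriv (fun t => H4 H a t c) b
/-- `H''₄₄`. -/
noncomputable def H44 (H : ℝ → ℝ → ℝ → ℝ) (a b c : ℝ) : ℝ := deriv (fun t => H4 H a b t) c

/-- Ricci tensor `Ricⱼₖ = Σᵢ (R(∂ᵢ,∂ⱼ)∂ₖ)ⁱ` of the Siklos metric. -/
noncomputable def ricci (β : ℝ) (H : ℝ → ℝ → ℝ → ℝ) (x : Fin 4 → ℝ) (j k : Fin 4) : ℝ :=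
  ∑ i, curv (siklos β H) x i j k i

/-- Scalar curvature of the Siklos metric. -/
noncomputable def scal (β : ℝ) (H : ℝ → ℝ → ℝ → ℝ) (x : Fin 4 → ℝ) : ℝ :=
  ∑ j, ∑ k, (siklos β H x)⁻¹ j k * ricci β H x j k

/-- `g(X,Y) = Σᵢⱼ gᵢⱼ Xⁱ Yʲ`. -/
noncomputable def gApply (M : Matrix (Fin 4) (Fin 4) ℝ) (X Y : Fin 4 → ℝ) : ℝ :=
  ∑ i, ∑ j, M i j * X i * Y j

/-- Curvature applied to arbitrary vectors: `R(X,Y)Z = Σᵢⱼₖ XⁱYʲZᵏ R(∂ᵢ,∂ⱼ)∂ₖ`. -/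
noncomputable def Rmulti (β : ℝ) (H : ℝ → ℝ → ℝ → ℝ) (x : Fin 4 → ℝ)
    (X Y Z : Fin 4 → ℝ) (l : Fin 4) : ℝ :=
  ∑ i, ∑ j, ∑ k, X i * Y j * Z k * curv (siklos β H) x i j k l

/-- `Rₐᵦ𝒸𝒹 = g(R(∂ₐ,∂ᵦ)∂𝒹, ∂𝒸)`. -/
noncomputable def Rlow (β : ℝ) (H : ℝ → ℝ → ℝ → ℝ) (x : Fin 4 → ℝ) (a b c d : Fin 4) : ℝ :=
  ∑ l, siklos β H x l c * curv (siklos β H) x a b d l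

/-- The Weyl tensor (in dimension 4) of the Siklos metric. -/
noncomputable def weyl (β : ℝ) (H : ℝ → ℝ → ℝ → ℝ) (x : Fin 4 → ℝ) (a b c d : Fin 4) : ℝ :=
  Rlow β H x a b c d
    - (1 / 2) * (siklos β H x a c * ricci β H x b d - siklos β H x a d * ricci β H x b c
        + siklos β H x b d * ricci β H x a c - siklos β H x b c * ricci β H x a d)
    + scal β H x / 6 *
        (siklos β H x a c * siklos β H x b d - siklos β H x a d * siklos β H x b c)

/-- Coordinate tangent vector `F_{uᵢ}` of an immersion `F : ℝ³ → ℝ⁴`. -/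
noncomputable def Fu (F : (Fin 3 → ℝ) → Fin 4 → ℝ) (i : Fin 3) (u : Fin 3 → ℝ) :
    Fin 4 → ℝ := fun k => pd i (fun v => F v k) u

/-- Ambient covariant derivative `DᵢF_{uⱼ}` along `F`, for the Siklos metric. -/
noncomputable def ambD (β : ℝ) (H : ℝ → ℝ → ℝ → ℝ) (F : (Fin 3 → ℝ) → Fin 4 → ℝ)
    (i j : Fin 3) (u : Fin 3 → ℝ) : Fin 4 → ℝ :=
  fun k => pd i (fun v => Fu F j v k) u
    + ∑ l, ∑ m, christoffel (siklos β H) (F u) k l m * Fu F i u l * Fu F j u m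

/-- Second fundamental form `hᵢⱼ = g(DᵢF_{uⱼ}, ξ)` of `F` with unit normal `ξ`. -/
noncomputable def sff (β : ℝ) (H : ℝ → ℝ → ℝ → ℝ) (F ξ : (Fin 3 → ℝ) → Fin 4 → ℝ)
    (i j : Fin 3) (u : Fin 3 → ℝ) : ℝ :=
  gApply (siklos β H (F u)) (ambD β H F i j u) (ξ u)

/-- Induced metric `ĝᵢⱼ = g(F_{uᵢ}, F_{uⱼ})` of the hypersurface. -/
noncomputable def inducedMetric (β : ℝ) (H : ℝ → ℝ → ℝ → ℝ) (F : (Fin 3 → ℝ) → Fin 4 → ℝ)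
    (u : Fin 3 → ℝ) : Matrix (Fin 3) (Fin 3) ℝ :=
  Matrix.of fun i j => gApply (siklos β H (F u)) (Fu F i u) (Fu F j u)

/-- Covariant derivative of the second fundamental form,
`(∇h)ₖᵢⱼ = ∂ₖhᵢⱼ − Σₗ Γ̂ˡₖᵢ hₗⱼ − Σₗ Γ̂ˡₖⱼ hᵢₗ`. -/
noncomputable def nablah (β : ℝ) (H : ℝ → ℝ → ℝ → ℝ) (F ξ : (Fin 3 → ℝ) → Fin 4 → ℝ)
    (k i j : Fin 3) (u : Fin 3 → ℝ) : ℝ :=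
  pd k (fun v => sff β H F ξ i j v) u
    - ∑ l, christoffel (inducedMetric β H F) u l k i * sff β H F ξ l j u
    - ∑ l, christoffel (inducedMetric β H F) u l k j * sff β H F ξ i l u

/-- Mean curvature `(1/3) Σᵢⱼ ĝⁱʲ hᵢⱼ` of the hypersurface. -/
noncomputable def meanCurv (β : ℝ) (H : ℝ → ℝ → ℝ → ℝ) (F ξ : (Fin 3 → ℝ) → Fin 4 → ℝ)
    (u : Fin 3 → ℝ) : ℝ :=
  (1 / 3) * ∑ i, ∑ j, (inducedMetric β H F u)⁻¹ i j * sff β H F ξ i j u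

noncomputable def Sinv (β : ℝ) (H : ℝ → ℝ → ℝ → ℝ) (y : Fin 4 → ℝ) :
    Matrix (Fin 4) (Fin 4) ℝ :=
  Matrix.of fun i j =>
    if i = 0 ∧ j = 0 then -(y 2 ^ 2 / β ^ 2) * H (y 1) (y 2) (y 3)
    else if (i = 0 ∧ j = 1) ∨ (i = 1 ∧ j = 0) ∨ (i = 2 ∧ j = 2) ∨ (i = 3 ∧ j = 3) then
      y 2 ^ 2 / β ^ 2
    else 0

lemma siklos_inv {β : ℝ} (hβ : β ≠ 0) (H : ℝ → ℝ → ℝ → ℝ) {y : Fin 4 → ℝ} (hy : y 2 ≠ 0) :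
    (siklos β H y)⁻¹ = Sinv β H y := by
  apply Matrix.inv_eq_right_inv
  ext i j
  fin_cases i <;> fin_cases j <;>
    simp [siklos, Sinv, Matrix.mul_apply, Fin.sum_univ_four, Matrix.one_apply] <;>
    field_simp <;> ring
section Hderiv
variable {H : ℝ → ℝ → ℝ → ℝ}
  (hH : ContDiff ℝ (⊤ : ℕ∞) fun p : ℝ × ℝ × ℝ => H p.1 p.2.1 p.2.2)

private lemma line1 (a b c : ℝ) :
    HasDerivAt (fun t => ((t, b, c) : ℝ × ℝ × ℝ)) (1, 0, 0) a :=
  (hasDerivAt_id a).prodMk ((hasDerivAt_const _ _).prodMk (hasDerivAt_const _ _))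
private lemma line2 (a b c : ℝ) :
    HasDerivAt (fun t => ((a, t, c) : ℝ × ℝ × ℝ)) (0, 1, 0) b :=
  (hasDerivAt_const _ _).prodMk ((hasDerivAt_id b).prodMk (hasDerivAt_const _ _))
private lemma line3 (a b c : ℝ) :
    HasDerivAt (fun t => ((a, b, t) : ℝ × ℝ × ℝ)) (0, 0, 1) c :=
  (hasDerivAt_const _ _).prodMk ((hasDerivAt_const _ _).prodMk (hasDerivAt_id c))

include hH

lemma hasDerivAt_H3 (a b c : ℝ) :
    HasDerivAt (fun t => H a t c)
      (fderiv ℝ (fun p : ℝ × ℝ × ℝ => H p.1 p.2.1 p.2.2) (a, b, c) (0, 1, 0)) b :=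
  by have h := ((hH.differentiable (by simp) (a, b, c)).hasFDerivAt).comp_hasDerivAt b (line2 a b c)
     exact h

lemma hasDerivAt_H4 (a b c : ℝ) :
    HasDerivAt (fun t => H a b t)
      (fderiv ℝ (fun p : ℝ × ℝ × ℝ => H p.1 p.2.1 p.2.2) (a, b, c) (0, 0, 1)) c :=
  by have h := ((hH.differentiable (by simp) (a, b, c)).hasFDerivAt).comp_hasDerivAt c (line3 a b c)
     exact h

lemma H3_eq (a b c : ℝ) :
    H3 H a b c = fderiv ℝ (fun p : ℝ × ℝ × ℝ => H p.1 p.2.1 p.2.2) (a, b, c) (0, 1, 0) :=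
  (hasDerivAt_H3 hH a b c).deriv

lemma H4_eq (a b c : ℝ) :
    H4 H a b c = fderiv ℝ (fun p : ℝ × ℝ × ℝ => H p.1 p.2.1 p.2.2) (a, b, c) (0, 0, 1) :=
  (hasDerivAt_H4 hH a b c).deriv

lemma contDiff_G :
    ContDiff ℝ (⊤ : ℕ∞) (fderiv ℝ (fun p : ℝ × ℝ × ℝ => H p.1 p.2.1 p.2.2)) :=
  hH.fderiv_right (by simp)

end Hderiv
section Hderiv2
variable {H : ℝ → ℝ → ℝ → ℝ}
  (hH : ContDiff ℝ (⊤ : ℕ∞) fun p : ℝ × ℝ × ℝ => H p.1 p.2.1 p.2.2)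

include hH

private lemma hasDerivAt_G2 (a b c : ℝ) (v : ℝ × ℝ × ℝ) :
    HasDerivAt (fun t => fderiv ℝ (fun p : ℝ × ℝ × ℝ => H p.1 p.2.1 p.2.2) (a, t, c) v)
      (fderiv ℝ (fderiv ℝ (fun p : ℝ × ℝ × ℝ => H p.1 p.2.1 p.2.2)) (a, b, c) (0, 1, 0) v)
      b := by
  have h1 := ((contDiff_G hH).differentiable (by simp) (a, b, c)).hasFDerivAt
  have h2 := ((ContinuousLinearMap.apply ℝ ℝ v).hasFDerivAt.comp _ h1).comp_hasDerivAt b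
    (line2 a b c)
  exact h2

private lemma hasDerivAt_G3 (a b c : ℝ) (v : ℝ × ℝ × ℝ) :
    HasDerivAt (fun t => fderiv ℝ (fun p : ℝ × ℝ × ℝ => H p.1 p.2.1 p.2.2) (a, b, t) v)
      (fderiv ℝ (fderiv ℝ (fun p : ℝ × ℝ × ℝ => H p.1 p.2.1 p.2.2)) (a, b, c) (0, 0, 1) v)
      c := by
  have h1 := ((contDiff_G hH).differentiable (by simp) (a, b, c)).hasFDerivAt
  exact ((ContinuousLinearMap.apply ℝ ℝ v).hasFDerivAt.comp _ h1).comp_hasDerivAt c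
    (line3 a b c)

lemma H34_eq (a b c : ℝ) :
    H34 H a b c = fderiv ℝ (fderiv ℝ (fun p : ℝ × ℝ × ℝ => H p.1 p.2.1 p.2.2)) (a, b, c)
      (0, 1, 0) (0, 0, 1) := by
  have : (fun t => H4 H a t c)
      = fun t => fderiv ℝ (fun p : ℝ × ℝ × ℝ => H p.1 p.2.1 p.2.2) (a, t, c) (0, 0, 1) := by
    funext t; exact H4_eq hH a t c
  rw [H34, this]
  exact (hasDerivAt_G2 hH a b c _).deriv

/-- Clairaut: the `wz` derivative equals `H34 = ∂z∂w H`. -/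
lemma deriv_H3_third (a b c : ℝ) :
    deriv (fun t => H3 H a b t) c = H34 H a b c := by
  have : (fun t => H3 H a b t)
      = fun t => fderiv ℝ (fun p : ℝ × ℝ × ℝ => H p.1 p.2.1 p.2.2) (a, b, t) (0, 1, 0) := by
    funext t; exact H3_eq hH a b t
  rw [this, (hasDerivAt_G3 hH a b c _).deriv, H34_eq hH]
  exact (hH.contDiffAt.isSymmSndFDerivAt (by norm_num; exact WithTop.coe_le_coe.mpr (le_top : (2:ℕ∞) ≤ ⊤))) _ _
end Hderiv2
lemma fin4_cases (i : Fin 4) : i = 0 ∨ i = 1 ∨ i = 2 ∨ i = 3 := by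
  fin_cases i <;> simp

section PdMetric
variable {H : ℝ → ℝ → ℝ → ℝ}
  (hH : ContDiff ℝ (⊤ : ℕ∞) fun p : ℝ × ℝ × ℝ => H p.1 p.2.1 p.2.2)

include hH in
lemma hasDerivAt_H2' (a b c : ℝ) : HasDerivAt (fun t => H t b c) (H2 H a b c) a := by
  have h := ((hH.differentiable (by simp) (a, b, c)).hasFDerivAt).comp_hasDerivAt a (line1 a b c)
  rwa [show H2 H a b c = _ from h.deriv]

include hH in
lemma hasDerivAt_H3' (a b c : ℝ) : HasDerivAt (fun t => H a t c) (H3 H a b c) b := by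
  have h := hasDerivAt_H3 hH a b c; rwa [show H3 H a b c = _ from h.deriv]

include hH in
lemma hasDerivAt_H4' (a b c : ℝ) : HasDerivAt (fun t => H a b t) (H4 H a b c) c := by
  have h := hasDerivAt_H4 hH a b c; rwa [show H4 H a b c = _ from h.deriv]

lemma pd_const {n : ℕ} (i : Fin n) (c : ℝ) (y : Fin n → ℝ) : pd i (fun _ => c) y = 0 := by
  simp [pd]

lemma pdA {β : ℝ} (i : Fin 4) {y : Fin 4 → ℝ} (hy : y 2 ≠ 0) :
    pd i (fun z => β ^ 2 / z 2 ^ 2) y = if i = 2 then -2 * β ^ 2 / y 2 ^ 3 else 0 := by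
  by_cases hi : i = 2
  · subst hi
    have h := (hasDerivAt_const (y 2) (β ^ 2)).div (hasDerivAt_pow 2 (y 2))
      (pow_ne_zero 2 hy)
    simp only [pd, Function.update_self, if_pos trivial]
    rw [(show HasDerivAt (fun t => β ^ 2 / t ^ 2) _ (y 2) from h).deriv]
    field_simp
    ring
  · simp only [pd, Function.update_of_ne (Ne.symm hi), if_neg hi, deriv_const]

include hH in
lemma pdAH {β : ℝ} (i : Fin 4) {y : Fin 4 → ℝ} (hy : y 2 ≠ 0) :
    pd i (fun z => β ^ 2 / z 2 ^ 2 * H (z 1) (z 2) (z 3)) y =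
      if i = 1 then β ^ 2 / y 2 ^ 2 * H2 H (y 1) (y 2) (y 3)
      else if i = 2 then -2 * β ^ 2 / y 2 ^ 3 * H (y 1) (y 2) (y 3)
          + β ^ 2 / y 2 ^ 2 * H3 H (y 1) (y 2) (y 3)
      else if i = 3 then β ^ 2 / y 2 ^ 2 * H4 H (y 1) (y 2) (y 3)
      else 0 := by
  rcases fin4_cases i with rfl | rfl | rfl | rfl
  · simp only [pd]
    rw [show (fun t => β ^ 2 / Function.update y 0 t 2 ^ 2
        * H (Function.update y 0 t 1) (Function.update y 0 t 2) (Function.update y 0 t 3))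
      = fun _ => β ^ 2 / y 2 ^ 2 * H (y 1) (y 2) (y 3) from by
        funext t; rw [Function.update_of_ne (by decide), Function.update_of_ne (by decide),
          Function.update_of_ne (by decide)]]
    simp
  · simp only [pd]
    have h := (hasDerivAt_H2' hH (y 1) (y 2) (y 3)).const_mul (β ^ 2 / y 2 ^ 2)
    rw [show (fun t => β ^ 2 / Function.update y 1 t 2 ^ 2
        * H (Function.update y 1 t 1) (Function.update y 1 t 2) (Function.update y 1 t 3))
      = fun t => β ^ 2 / y 2 ^ 2 * H t (y 2) (y 3) from by
        funext t; rw [Function.update_self, Function.update_of_ne (by decide),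
          Function.update_of_ne (by decide)]]
    rw [h.deriv, if_pos trivial]
  · simp only [pd]
    have h1 := (hasDerivAt_const (y 2) (β ^ 2)).div (hasDerivAt_pow 2 (y 2))
      (pow_ne_zero 2 hy)
    have h := h1.mul (hasDerivAt_H3' hH (y 1) (y 2) (y 3))
    rw [show (fun t => β ^ 2 / Function.update y 2 t 2 ^ 2
        * H (Function.update y 2 t 1) (Function.update y 2 t 2) (Function.update y 2 t 3))
      = fun t => β ^ 2 / t ^ 2 * H (y 1) t (y 3) from by
        funext t; rw [Function.update_self, Function.update_of_ne (by decide),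
          Function.update_of_ne (by decide)]]
    rw [(show HasDerivAt (fun t => β ^ 2 / t ^ 2 * H (y 1) t (y 3)) _ (y 2) from h).deriv, if_neg (by decide),
      if_pos trivial]
    simp only [Pi.div_apply]
    field_simp
    ring
  · simp only [pd]
    have h := (hasDerivAt_H4' hH (y 1) (y 2) (y 3)).const_mul (β ^ 2 / y 2 ^ 2)
    rw [show (fun t => β ^ 2 / Function.update y 3 t 2 ^ 2
        * H (Function.update y 3 t 1) (Function.update y 3 t 2) (Function.update y 3 t 3))
      = fun t => β ^ 2 / y 2 ^ 2 * H (y 1) (y 2) t from by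
        funext t; rw [Function.update_self, Function.update_of_ne (by decide),
          Function.update_of_ne (by decide)]]
    rw [h.deriv, if_neg (by decide), if_neg (by decide), if_pos trivial]
end PdMetric
/-- Explicit Christoffel symbols of the Siklos metric. -/
noncomputable def Γe (H : ℝ → ℝ → ℝ → ℝ) (k i j : Fin 4) (y : Fin 4 → ℝ) : ℝ :=
  if k = 0 ∧ ((i = 0 ∧ j = 2) ∨ (i = 2 ∧ j = 0)) then -(1 / y 2)
  else if k = 0 ∧ i = 1 ∧ j = 1 then H2 H (y 1) (y 2) (y 3) / 2
  else if k = 0 ∧ ((i = 1 ∧ j = 2) ∨ (i = 2 ∧ j = 1)) then H3 H (y 1) (y 2) (y 3) / 2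
  else if k = 0 ∧ ((i = 1 ∧ j = 3) ∨ (i = 3 ∧ j = 1)) then H4 H (y 1) (y 2) (y 3) / 2
  else if k = 1 ∧ ((i = 1 ∧ j = 2) ∨ (i = 2 ∧ j = 1)) then -(1 / y 2)
  else if k = 2 ∧ ((i = 0 ∧ j = 1) ∨ (i = 1 ∧ j = 0)) then 1 / y 2
  else if k = 2 ∧ i = 1 ∧ j = 1 then
    H (y 1) (y 2) (y 3) / y 2 - H3 H (y 1) (y 2) (y 3) / 2
  else if k = 2 ∧ i = 2 ∧ j = 2 then -(1 / y 2)
  else if k = 2 ∧ i = 3 ∧ j = 3 then 1 / y 2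
  else if k = 3 ∧ i = 1 ∧ j = 1 then -(H4 H (y 1) (y 2) (y 3) / 2)
  else if k = 3 ∧ ((i = 2 ∧ j = 3) ∨ (i = 3 ∧ j = 2)) then -(1 / y 2)
  else 0

set_option maxHeartbeats 4000000 in
lemma christoffel_eq {β : ℝ} (hβ : β ≠ 0) {H : ℝ → ℝ → ℝ → ℝ}
    (hH : ContDiff ℝ (⊤ : ℕ∞) fun p : ℝ × ℝ × ℝ => H p.1 p.2.1 p.2.2)
    {y : Fin 4 → ℝ} (hy : y 2 ≠ 0) (k i j : Fin 4) :
    christoffel (siklos β H) y k i j = Γe H k i j y := by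
  rcases fin4_cases k with rfl | rfl | rfl | rfl <;>
    rcases fin4_cases i with rfl | rfl | rfl | rfl <;>
    rcases fin4_cases j with rfl | rfl | rfl | rfl <;>
  · unfold christoffel
    rw [siklos_inv hβ H hy]
    simp only [Fin.sum_univ_four]
    simp (config := { decide := true }) only [siklos, Matrix.of_apply, if_true, if_false]
    simp (config := { decide := true }) only [pd_const, pdA _ hy, pdAH hH _ hy, Sinv, Γe,
      Matrix.of_apply, if_true, if_false]
    try field_simp
    try ring
section Curv
variable {β : ℝ} {H : ℝ → ℝ → ℝ → ℝ} {x : Fin 4 → ℝ}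

lemma pd_congr {f g : (Fin 4 → ℝ) → ℝ} (hx : x 2 ≠ 0) (i : Fin 4)
    (h : ∀ y : Fin 4 → ℝ, y 2 ≠ 0 → f y = g y) : pd i f x = pd i g x := by
  unfold pd
  apply Filter.EventuallyEq.deriv_eq
  by_cases hi : i = 2
  · subst hi
    filter_upwards [eventually_ne_nhds hx] with t ht
    exact h _ (by simpa [Function.update_self] using ht)
  · filter_upwards with t
    exact h _ (by rw [Function.update_of_ne (Ne.symm hi)]; exact hx)

lemma curv_eq (hβ : β ≠ 0)
    (hH : ContDiff ℝ (⊤ : ℕ∞) fun p : ℝ × ℝ × ℝ => H p.1 p.2.1 p.2.2)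
    (hx : x 2 ≠ 0) (i j k l : Fin 4) :
    curv (siklos β H) x i j k l =
      pd i (fun y => Γe H l j k y) x - pd j (fun y => Γe H l i k y) x
        + ∑ m, (Γe H l i m x * Γe H m j k x - Γe H l j m x * Γe H m i k x) := by
  unfold curv
  rw [pd_congr hx i (fun y hy => christoffel_eq hβ hH hy l j k),
    pd_congr hx j (fun y hy => christoffel_eq hβ hH hy l i k)]
  congr 1
  exact Finset.sum_congr rfl fun m _ => by
    rw [christoffel_eq hβ hH hx, christoffel_eq hβ hH hx, christoffel_eq hβ hH hx,
      christoffel_eq hβ hH hx]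

lemma pd_ne2_inv (i : Fin 4) (hi : i ≠ 2) : pd i (fun y : Fin 4 → ℝ => -(1 / y 2)) x = 0 := by
  unfold pd
  rw [show (fun t => -(1 / Function.update x i t 2)) = fun _ => -(1 / x 2) from by
    funext t; rw [Function.update_of_ne (Ne.symm hi)]]
  exact deriv_const _ _

lemma pd2_H3half :
    pd 2 (fun y : Fin 4 → ℝ => H3 H (y 1) (y 2) (y 3) / 2) x
      = H33 H (x 1) (x 2) (x 3) / 2 := by
  unfold pd
  rw [show (fun t => H3 H (Function.update x 2 t 1) (Function.update x 2 t 2)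
        (Function.update x 2 t 3) / 2) = fun t => H3 H (x 1) t (x 3) / 2 from by
    funext t
    rw [Function.update_self, Function.update_of_ne (by decide),
      Function.update_of_ne (by decide)]]
  rw [deriv_div_const]
  rfl

lemma pd2_H4half :
    pd 2 (fun y : Fin 4 → ℝ => H4 H (y 1) (y 2) (y 3) / 2) x
      = H34 H (x 1) (x 2) (x 3) / 2 := by
  unfold pd
  rw [show (fun t => H4 H (Function.update x 2 t 1) (Function.update x 2 t 2)
        (Function.update x 2 t 3) / 2) = fun t => H4 H (x 1) t (x 3) / 2 from by
    funext t
    rw [Function.update_self, Function.update_of_ne (by decide),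
      Function.update_of_ne (by decide)]]
  rw [deriv_div_const]
  rfl

lemma pd3_H4half :
    pd 3 (fun y : Fin 4 → ℝ => H4 H (y 1) (y 2) (y 3) / 2) x
      = H44 H (x 1) (x 2) (x 3) / 2 := by
  unfold pd
  rw [show (fun t => H4 H (Function.update x 3 t 1) (Function.update x 3 t 2)
        (Function.update x 3 t 3) / 2) = fun t => H4 H (x 1) (x 2) t / 2 from by
    funext t
    rw [Function.update_self, Function.update_of_ne (by decide),
      Function.update_of_ne (by decide)]]
  rw [deriv_div_const]
  rfl

lemma pd3_H3half (hH : ContDiff ℝ (⊤ : ℕ∞) fun p : ℝ × ℝ × ℝ => H p.1 p.2.1 p.2.2) :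
    pd 3 (fun y : Fin 4 → ℝ => H3 H (y 1) (y 2) (y 3) / 2) x
      = H34 H (x 1) (x 2) (x 3) / 2 := by
  unfold pd
  rw [show (fun t => H3 H (Function.update x 3 t 1) (Function.update x 3 t 2)
        (Function.update x 3 t 3) / 2) = fun t => H3 H (x 1) (x 2) t / 2 from by
    funext t
    rw [Function.update_self, Function.update_of_ne (by decide),
      Function.update_of_ne (by decide)]]
  rw [deriv_div_const, deriv_H3_third hH]

end Curv
section CurvComp
variable {β : ℝ} {H : ℝ → ℝ → ℝ → ℝ} {x : Fin 4 → ℝ}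
  (hβ : β ≠ 0) (hH : ContDiff ℝ (⊤ : ℕ∞) fun p : ℝ × ℝ × ℝ => H p.1 p.2.1 p.2.2) (hx : x 2 ≠ 0)

lemma curv_diag {n : ℕ} (g : (Fin n → ℝ) → Matrix (Fin n) (Fin n) ℝ) (y : Fin n → ℝ)
    (i k l : Fin n) : curv g y i i k l = 0 := by
  simp [curv]

include hβ hH hx

lemma c122 : curv (siklos β H) x 1 2 2 0
    = H3 H (x 1) (x 2) (x 3) / (2 * x 2) - H33 H (x 1) (x 2) (x 3) / 2 := by
  rw [curv_eq hβ hH hx]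
  simp (config := { decide := true }) only [Γe, Fin.sum_univ_four, if_true, if_false]
  rw [pd_const, pd2_H3half]
  field_simp
  ring

lemma c123 : curv (siklos β H) x 1 2 3 0 = -(H34 H (x 1) (x 2) (x 3) / 2) := by
  rw [curv_eq hβ hH hx]
  simp (config := { decide := true }) only [Γe, Fin.sum_univ_four, if_true, if_false]
  rw [pd_const, pd2_H4half]
  ring

lemma c132 : curv (siklos β H) x 1 3 2 0 = -(H34 H (x 1) (x 2) (x 3) / 2) := by
  rw [curv_eq hβ hH hx]
  simp (config := { decide := true }) only [Γe, Fin.sum_univ_four, if_true, if_false]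
  rw [pd_const, pd3_H3half hH]
  ring

lemma c133 : curv (siklos β H) x 1 3 3 0
    = H3 H (x 1) (x 2) (x 3) / (2 * x 2) - H44 H (x 1) (x 2) (x 3) / 2 := by
  rw [curv_eq hβ hH hx]
  simp (config := { decide := true }) only [Γe, Fin.sum_univ_four, if_true, if_false]
  rw [pd_const, pd3_H4half]
  field_simp
  ring

lemma c120 : curv (siklos β H) x 1 2 0 0 = 0 := by
  rw [curv_eq hβ hH hx]
  simp (config := { decide := true }) only [Γe, Fin.sum_univ_four, if_true, if_false]
  rw [pd_ne2_inv 1 (by decide), pd_const]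
  ring

lemma c130 : curv (siklos β H) x 1 3 0 0 = 0 := by
  rw [curv_eq hβ hH hx]
  simp (config := { decide := true }) only [Γe, Fin.sum_univ_four, if_true, if_false]
  rw [pd_const, pd_const]
  ring

lemma c230 : curv (siklos β H) x 2 3 0 0 = 0 := by
  rw [curv_eq hβ hH hx]
  simp (config := { decide := true }) only [Γe, Fin.sum_univ_four, if_true, if_false]
  rw [pd_const, pd_ne2_inv 3 (by decide)]
  ring

lemma c232 : curv (siklos β H) x 2 3 2 0 = 0 := by
  rw [curv_eq hβ hH hx]
  simp (config := { decide := true }) only [Γe, Fin.sum_univ_four, if_true, if_false]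
  rw [pd_const, pd_const]
  ring

lemma c233 : curv (siklos β H) x 2 3 3 0 = 0 := by
  rw [curv_eq hβ hH hx]
  simp (config := { decide := true }) only [Γe, Fin.sum_univ_four, if_true, if_false]
  rw [pd_const, pd_const]
  ring

lemma c320 : curv (siklos β H) x 3 2 0 0 = 0 := by
  rw [curv_eq hβ hH hx]
  simp (config := { decide := true }) only [Γe, Fin.sum_univ_four, if_true, if_false]
  rw [pd_ne2_inv 3 (by decide), pd_const]
  ring

lemma c322 : curv (siklos β H) x 3 2 2 0 = 0 := by
  rw [curv_eq hβ hH hx]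
  simp (config := { decide := true }) only [Γe, Fin.sum_univ_four, if_true, if_false]
  rw [pd_const, pd_const]
  ring

lemma c323 : curv (siklos β H) x 3 2 3 0 = 0 := by
  rw [curv_eq hβ hH hx]
  simp (config := { decide := true }) only [Γe, Fin.sum_univ_four, if_true, if_false]
  rw [pd_const, pd_const]
  ring

end CurvComp

/-- Codazzi conditions with `b = 0` force
`cd(H''₃₃ − H''₄₄) + H''₃₄(d² − c²) = 0`. -/
theorem stmt_9 (β : ℝ) (hβ : 0 < β) (H : ℝ → ℝ → ℝ → ℝ)
    (hH : ContDiff ℝ (⊤ : ℕ∞) fun p : ℝ × ℝ × ℝ => H p.1 p.2.1 p.2.2)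
    (x : Fin 4 → ℝ) (hx : 0 < x 2) (a c d : ℝ) (hcd : (c, d) ≠ (0, 0))
    (h1 : ∀ l : Fin 4, Rmulti β H x ![0, c, -a, 0] ![0, d, 0, -a] ![a, 0, c, d] l = 0)
    (h2 : ∀ l : Fin 4, Rmulti β H x ![0, c, -a, 0] ![0, 0, d, -c] ![a, 0, c, d] l = 0)
    (h3 : ∀ l : Fin 4, Rmulti β H x ![0, d, 0, -a] ![0, 0, d, -c] ![a, 0, c, d] l = 0) :
    c * d * (H33 H (x 1) (x 2) (x 3) - H44 H (x 1) (x 2) (x 3))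
      + H34 H (x 1) (x 2) (x 3) * (d ^ 2 - c ^ 2) = 0 := by
  have hβ' : β ≠ 0 := ne_of_gt hβ
  have hx' : x 2 ≠ 0 := ne_of_gt hx
  have e2 := h2 0
  have e3 := h3 0
  simp only [Rmulti, Fin.sum_univ_four, Matrix.cons_val_zero, Matrix.cons_val_one,
    Matrix.head_cons, Matrix.cons_val_two, Matrix.tail_cons, Matrix.cons_val_three,
    Matrix.head_fin_const, zero_mul, mul_zero, add_zero, zero_add, mul_neg, neg_mul,
    neg_zero] at e2 e3
  rw [c120 hβ' hH hx', c122 hβ' hH hx', c123 hβ' hH hx', c130 hβ' hH hx',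
    c132 hβ' hH hx', c133 hβ' hH hx', c230 hβ' hH hx', c232 hβ' hH hx',
    c233 hβ' hH hx', curv_diag, curv_diag, curv_diag] at e2
  rw [c120 hβ' hH hx', c122 hβ' hH hx', c123 hβ' hH hx', c130 hβ' hH hx',
    c132 hβ' hH hx', c133 hβ' hH hx', c320 hβ' hH hx', c322 hβ' hH hx',
    c323 hβ' hH hx', curv_diag, curv_diag, curv_diag] at e3
  have hc : c ≠ 0 ∨ d ≠ 0 := by
    by_contra h
    push_neg at h
    exact hcd (by rw [h.1, h.2])
  rcases hc with hc | hd
  · have key : c * (c * d * (H33 H (x 1) (x 2) (x 3) - H44 H (x 1) (x 2) (x 3))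
        + H34 H (x 1) (x 2) (x 3) * (d ^ 2 - c ^ 2)) = 0 := by
      linear_combination (-2 : ℝ) * e2
    exact (mul_eq_zero.mp key).resolve_left hc
  · have key : d * (c * d * (H33 H (x 1) (x 2) (x 3) - H44 H (x 1) (x 2) (x 3))
        + H34 H (x 1) (x 2) (x 3) * (d ^ 2 - c ^ 2)) = 0 := by
      linear_combination (-2 : ℝ) * e3
    exact (mul_eq_zero.mp key).resolve_left hd
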